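/- Let I be a finite set of 3D items with all dimensions in (0,1] and total volume at most 1/1728. If 90-degree rotations are allowed, i.e., each item may be packed after applying an arbitrary permutation to its triple of dimensions (width, depth, height), then all items of I can be packed into a single unit cube bin [0,1]^3. -/

import Mathlib

/-- The open region occupied by a 3D item of width `w`, depth `d`, height `h`
placed with its bottom-left-back corner at `(x, y, z)`. -/
def ItemRegion (w d h x y z : ℝ) : Set (ℝ × ℝ × ℝ) :=
  Set.Ioo x (x + w) ×ˢ (Set.Ioo y (y + d) ×ˢ Set.Ioo z (z + h))

/-- `IsPacking T w d h W D H x y z` : the placement `(x, y, z)` is a feasible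
axis-aligned non-overlapping packing of the items of `T` (with dimensions
`w`, `d`, `h`) into the box `[0,W] × [0,D] × [0,H]`. -/
def IsPacking {ι : Type*} (T : Finset ι) (w d h : ι → ℝ) (W D H : ℝ)
    (x y z : ι → ℝ) : Prop :=
  (∀ i ∈ T, 0 ≤ x i ∧ x i + w i ≤ W ∧ 0 ≤ y i ∧ y i + d i ≤ D ∧
      0 ≤ z i ∧ z i + h i ≤ H) ∧
  (∀ i ∈ T, ∀ j ∈ T, i ≠ j →
    Disjoint (ItemRegion (w i) (d i) (h i) (x i) (y i) (z i))
             (ItemRegion (w j) (d j) (h j) (x j) (y j) (z j)))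

/-- The items of `T` can be packed into the box `[0,W] × [0,D] × [0,H]`. -/
def CanPack {ι : Type*} (T : Finset ι) (w d h : ι → ℝ) (W D H : ℝ) : Prop :=
  ∃ x y z : ι → ℝ, IsPacking T w d h W D H x y z

/-!
Turn every item so that its smallest side is vertical; that side is then at most `1/12`.
Round every side up to a power of `1/2`, at most doubling it, so the rounded heights are at
most `1/8`. Items of equal rounded depth and height are laid side by side in rows of length at
most `1`, rows of equal height are put next to each other in layers of depth at most `1`, and
the layers are stacked. For sizes that are powers of `1/2`, first fit by decreasing size uses
at most `⌈total size⌉` bins, so the stack has height at most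
`∑ᵢ (rounded volume of i) + ∑ (β γ) + ∑ γ`, the last two sums running over the distinct
(depth, height) pairs and the distinct heights. As distinct powers of `1/2` up to `2⁻ᵐ` sum to
at most `2 · 2⁻ᵐ`, this is at most `8/1728 + 2 · 1/4 + 1/4 ≤ 1`.
-/

open Finset

section Geometry

variable {ι : Type*}

theorem itemRegion_subset {w d h x y z w' d' h' x' y' z' : ℝ} (hx : x' ≤ x)
    (hw : x + w ≤ x' + w') (hy : y' ≤ y) (hd : y + d ≤ y' + d') (hz : z' ≤ z)
    (hh : z + h ≤ z' + h') :
    ItemRegion w d h x y z ⊆ ItemRegion w' d' h' x' y' z' :=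
  Set.prod_mono (Set.Ioo_subset_Ioo hx hw)
    (Set.prod_mono (Set.Ioo_subset_Ioo hy hd) (Set.Ioo_subset_Ioo hz hh))

theorem disjoint_itemRegion_of_add_le {w d h x y z w' d' h' x' y' z' : ℝ} (hx : x + w ≤ x') :
    Disjoint (ItemRegion w d h x y z) (ItemRegion w' d' h' x' y' z') :=
  Set.disjoint_prod.2 <| .inl <| Set.Ioo_disjoint_Ioo.2 <|
    (min_le_left _ _).trans (hx.trans (le_max_right _ _))

theorem itemRegion_add (w d h a b c x y z : ℝ) :
    ItemRegion w d h (a + x) (b + y) (c + z) =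
      (fun p : ℝ × ℝ × ℝ => (p.1 - a, p.2.1 - b, p.2.2 - c)) ⁻¹' ItemRegion w d h x y z := by
  ext ⟨p, q, r⟩
  simp only [ItemRegion, Set.mem_prod, Set.mem_Ioo, Set.mem_preimage]
  constructor <;> rintro ⟨⟨_, _⟩, ⟨_, _⟩, ⟨_, _⟩⟩ <;>
    refine ⟨⟨?_, ?_⟩, ⟨?_, ?_⟩, ⟨?_, ?_⟩⟩ <;> linarith

theorem itemRegion_swap_xy (w d h x y z : ℝ) :
    ItemRegion d w h y x z =
      (fun p : ℝ × ℝ × ℝ => (p.2.1, p.1, p.2.2)) ⁻¹' ItemRegion w d h x y z := by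
  ext ⟨p, q, r⟩
  simp only [ItemRegion, Set.mem_prod, Set.mem_preimage]
  tauto

theorem itemRegion_swap_xz (w d h x y z : ℝ) :
    ItemRegion h d w z y x =
      (fun p : ℝ × ℝ × ℝ => (p.2.2, p.2.1, p.1)) ⁻¹' ItemRegion w d h x y z := by
  ext ⟨p, q, r⟩
  simp only [ItemRegion, Set.mem_prod, Set.mem_preimage]
  tauto

namespace CanPack

variable {T : Finset ι} {w d h : ι → ℝ} {W D H : ℝ}

theorem mono {w' d' h' : ι → ℝ} {W' D' H' : ℝ} (hp : CanPack T w d h W D H)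
    (hw : ∀ i ∈ T, w' i ≤ w i) (hd : ∀ i ∈ T, d' i ≤ d i) (hh : ∀ i ∈ T, h' i ≤ h i)
    (hW : W ≤ W') (hD : D ≤ D') (hH : H ≤ H') : CanPack T w' d' h' W' D' H' := by
  obtain ⟨x, y, z, hbox, hdisj⟩ := hp
  refine ⟨x, y, z, fun i hi => ?_, fun i hi j hj hij => ?_⟩
  · obtain ⟨h1, h2, h3, h4, h5, h6⟩ := hbox i hi
    exact ⟨h1, by linarith [hw i hi], h3, by linarith [hd i hi], h5, by linarith [hh i hi]⟩
  · have sub : ∀ k ∈ T, ItemRegion (w' k) (d' k) (h' k) (x k) (y k) (z k) ⊆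
        ItemRegion (w k) (d k) (h k) (x k) (y k) (z k) := fun k hk =>
      itemRegion_subset le_rfl (by linarith [hw k hk]) le_rfl (by linarith [hd k hk]) le_rfl
        (by linarith [hh k hk])
    exact (hdisj i hi j hj hij).mono (sub i hi) (sub j hj)

theorem swap_xy (hp : CanPack T w d h W D H) : CanPack T d w h D W H := by
  obtain ⟨x, y, z, hbox, hdisj⟩ := hp
  refine ⟨y, x, z, fun i hi => ?_, fun i hi j hj hij => ?_⟩
  · obtain ⟨h1, h2, h3, h4, h5, h6⟩ := hbox i hi
    exact ⟨h3, h4, h1, h2, h5, h6⟩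
  · rw [itemRegion_swap_xy (w i), itemRegion_swap_xy (w j)]
    exact (hdisj i hi j hj hij).preimage _

theorem swap_xz (hp : CanPack T w d h W D H) : CanPack T h d w H D W := by
  obtain ⟨x, y, z, hbox, hdisj⟩ := hp
  refine ⟨z, y, x, fun i hi => ?_, fun i hi j hj hij => ?_⟩
  · obtain ⟨h1, h2, h3, h4, h5, h6⟩ := hbox i hi
    exact ⟨h5, h6, h3, h4, h1, h2⟩
  · rw [itemRegion_swap_xz (w i), itemRegion_swap_xz (w j)]
    exact (hdisj i hi j hj hij).preimage _

theorem of_sum_width_le (hdim : ∀ i ∈ T, 0 ≤ w i ∧ d i ≤ D ∧ h i ≤ H)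
    (hsum : ∑ i ∈ T, w i ≤ W) : CanPack T w d h W D H := by
  classical
  let : LinearOrder ι := IsWellOrder.linearOrder WellOrderingRel
  have hprefix : ∀ i ∈ T, ∀ s ⊆ T, insert i {k ∈ T | k < i} ⊆ s →
      ∑ k ∈ T with k < i, w k + w i ≤ ∑ k ∈ s, w k := by
    intro i hi s hsT his
    rw [add_comm, ← sum_insert (by simp)]
    exact sum_le_sum_of_subset_of_nonneg his fun k hk _ => (hdim k (hsT hk)).1
  have hsep : ∀ i ∈ T, ∀ j, i < j → ∑ k ∈ T with k < i, w k + w i ≤ ∑ k ∈ T with k < j, w k :=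
    fun i hi j hij => hprefix i hi _ (filter_subset _ T) <| insert_subset (mem_filter.2 ⟨hi, hij⟩)
      fun k hk => mem_filter.2 ⟨(mem_filter.1 hk).1, (mem_filter.1 hk).2.trans hij⟩
  refine ⟨fun i => ∑ k ∈ T with k < i, w k, fun _ => 0, fun _ => 0, fun i hi => ?_,
    fun i hi j hj hij => ?_⟩
  · refine ⟨sum_nonneg fun k hk => (hdim k (mem_filter.1 hk).1).1, ?_, le_rfl, ?_, le_rfl, ?_⟩
    · exact (hprefix i hi T subset_rfl (insert_subset hi (filter_subset _ T))).trans hsum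
    · linarith [(hdim i hi).2.1]
    · linarith [(hdim i hi).2.2]
  rcases lt_or_gt_of_ne hij with hlt | hlt
  · exact disjoint_itemRegion_of_add_le (hsep i hi j hlt)
  · exact (disjoint_itemRegion_of_add_le (hsep j hj i hlt)).symm

theorem of_sum_depth_le (hdim : ∀ i ∈ T, w i ≤ W ∧ 0 ≤ d i ∧ h i ≤ H)
    (hsum : ∑ i ∈ T, d i ≤ D) : CanPack T w d h W D H :=
  swap_xy <| of_sum_width_le (fun i hi => ⟨(hdim i hi).2.1, (hdim i hi).1, (hdim i hi).2.2⟩) hsum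

theorem of_sum_height_le (hdim : ∀ i ∈ T, w i ≤ W ∧ d i ≤ D ∧ 0 ≤ h i)
    (hsum : ∑ i ∈ T, h i ≤ H) : CanPack T w d h W D H :=
  swap_xz <| of_sum_width_le (fun i hi => ⟨(hdim i hi).2.2, (hdim i hi).2.1, (hdim i hi).1⟩) hsum

theorem of_groups {κ : Type*} [DecidableEq κ] (g : ι → κ) {w' d' h' : κ → ℝ}
    (hgroup : ∀ q ∈ T.image g, CanPack {i ∈ T | g i = q} w d h (w' q) (d' q) (h' q))
    (hout : CanPack (T.image g) w' d' h' W D H) : CanPack T w d h W D H := by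
  choose! X Y Z hbox hdisj using hgroup
  obtain ⟨X', Y', Z', hbox', hdisj'⟩ := hout
  have hmem : ∀ i ∈ T, i ∈ {j ∈ T | g j = g i} := fun i hi => mem_filter.2 ⟨hi, rfl⟩
  refine ⟨fun i => X' (g i) + X (g i) i, fun i => Y' (g i) + Y (g i) i,
    fun i => Z' (g i) + Z (g i) i, fun i hi => ?_, fun i hi j hj hij => ?_⟩
  · obtain ⟨h1, h2, h3, h4, h5, h6⟩ := hbox (g i) (mem_image_of_mem g hi) i (hmem i hi)
    obtain ⟨k1, k2, k3, k4, k5, k6⟩ := hbox' (g i) (mem_image_of_mem g hi)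
    refine ⟨?_, ?_, ?_, ?_, ?_, ?_⟩ <;> linarith
  by_cases hg : g i = g j
  · simp only [← hg, itemRegion_add]
    refine (hdisj (g i) (mem_image_of_mem g hi) i (hmem i hi) j ?_ hij).preimage _
    exact mem_filter.2 ⟨hj, hg.symm⟩
  · have sub : ∀ k ∈ T, ItemRegion (w k) (d k) (h k) (X' (g k) + X (g k) k)
        (Y' (g k) + Y (g k) k) (Z' (g k) + Z (g k) k) ⊆
        ItemRegion (w' (g k)) (d' (g k)) (h' (g k)) (X' (g k)) (Y' (g k)) (Z' (g k)) := by
      intro k hk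
      obtain ⟨h1, h2, h3, h4, h5, h6⟩ := hbox (g k) (mem_image_of_mem g hk) k (hmem k hk)
      apply itemRegion_subset <;> linarith
    exact (hdisj' _ (mem_image_of_mem g hi) _ (mem_image_of_mem g hj) hg).mono
      (sub i hi) (sub j hj)

end CanPack

end Geometry

def IsPowHalf (x : ℝ) : Prop := ∃ k : ℕ, x = 2⁻¹ ^ k

namespace IsPowHalf

variable {x c : ℝ}

theorem pos (hx : IsPowHalf x) : 0 < x := by
  obtain ⟨k, rfl⟩ := hx
  positivity

theorem le_one (hx : IsPowHalf x) : x ≤ 1 := by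
  obtain ⟨k, rfl⟩ := hx
  exact pow_le_one₀ (by norm_num) (by norm_num)

theorem mem_zmultiples (hx : IsPowHalf x) (hc : IsPowHalf c) (hcx : c ≤ x) :
    x ∈ AddSubgroup.zmultiples c := by
  obtain ⟨j, rfl⟩ := hx
  obtain ⟨k, rfl⟩ := hc
  have hjk : j ≤ k := (pow_le_pow_iff_right_of_lt_one₀ (by norm_num) (by norm_num)).1 hcx
  refine ⟨2 ^ (k - j), ?_⟩
  dsimp only
  rw [zsmul_eq_mul, Int.cast_pow, Int.cast_ofNat, ← Nat.sub_add_cancel hjk, pow_add,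
    Nat.add_sub_cancel, ← mul_assoc, ← mul_pow]
  norm_num

theorem le_of_lt_two_mul (hx : IsPowHalf x) {m : ℕ} (hxm : x < 2 * 2⁻¹ ^ m) : x ≤ 2⁻¹ ^ m := by
  obtain ⟨k, rfl⟩ := hx
  refine (not_lt.1 fun h => ?_)
  have hkm : k + 1 ≤ m := (pow_lt_pow_iff_right_of_lt_one₀ (by norm_num) (by norm_num)).1 h
  have := pow_le_pow_of_le_one (a := (2⁻¹ : ℝ)) (by norm_num) (by norm_num) hkm
  rw [pow_succ] at this
  linarith

end IsPowHalf

theorem exists_isPowHalf_le_lt_two_mul {r : ℝ} (hr0 : 0 < r) (hr1 : r ≤ 1) :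
    ∃ x, IsPowHalf x ∧ r ≤ x ∧ x < 2 * r := by
  obtain ⟨n, hn, hn'⟩ := exists_nat_pow_near (one_le_inv₀ hr0 |>.2 hr1) one_lt_two
  refine ⟨2⁻¹ ^ n, ⟨n, rfl⟩, ?_, ?_⟩
  · rw [inv_pow]
    exact (le_inv_comm₀ hr0 (by positivity)).2 hn
  · rw [inv_pow, inv_lt_comm₀ (by positivity) (by positivity), mul_inv]
    rw [pow_succ] at hn'
    linarith

theorem eq_of_mem_zmultiples_of_lt_add {x y c : ℝ} (hc : 0 < c) (hx : x ∈ AddSubgroup.zmultiples c)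
    (hy : y ∈ AddSubgroup.zmultiples c) (hxy : x ≤ y) (hyx : y < x + c) : x = y := by
  obtain ⟨m, rfl⟩ := hx
  obtain ⟨n, rfl⟩ := hy
  simp only [zsmul_eq_mul] at *
  have hmn : m ≤ n := by exact_mod_cast le_of_mul_le_mul_right hxy hc
  have hnm : n < m + 1 := by
    exact_mod_cast lt_of_mul_lt_mul_right (by linarith : (n : ℝ) * c < (m + 1) * c) hc.le
  rw [show m = n by omega]

theorem sum_le_of_isPowHalf (s : Finset ℝ) (m : ℕ) (hs : ∀ x ∈ s, IsPowHalf x ∧ x ≤ 2⁻¹ ^ m) :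
    ∑ x ∈ s, x ≤ 2 * 2⁻¹ ^ m := by
  choose! e he using fun x hx => (hs x hx).1
  have hm : ∀ x ∈ s, m ≤ e x := fun x hx =>
    (pow_le_pow_iff_right_of_lt_one₀ (by norm_num) (by norm_num)).1 (he x hx ▸ (hs x hx).2)
  have hinj : Set.InjOn e s := fun x hx y hy hxy => by rw [he x hx, he y hy, hxy]
  calc ∑ x ∈ s, x = ∑ k ∈ s.image e, (2⁻¹ : ℝ) ^ k := by
        rw [sum_image hinj]
        exact sum_congr rfl he
    _ ≤ ∑ k ∈ Ico m (s.sup e + 1), (2⁻¹ : ℝ) ^ k := by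
        refine sum_le_sum_of_subset_of_nonneg (fun k hk => ?_) fun _ _ _ => by positivity
        obtain ⟨x, hx, rfl⟩ := mem_image.1 hk
        exact mem_Ico.2 ⟨hm x hx, Nat.lt_succ_of_le (le_sup hx)⟩
    _ ≤ 2⁻¹ ^ m / (1 - 2⁻¹) := geom_sum_Ico_le_of_lt_one (by norm_num) (by norm_num)
    _ = 2 * 2⁻¹ ^ m := by ring

section Binning

variable {κ : Type*}

/-- All loads are multiples of `c`, so a bin with no room for `c` is full; if every bin were
full, the `⌈∑ ℓ⌉` used bins would hold exactly `⌈∑ ℓ⌉`, and bin `⌈∑ ℓ⌉` would be free. -/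
theorem exists_bin_with_room (s : Finset κ) (ℓ : κ → ℝ) (f : κ → ℕ) {c : ℝ} (hc : 0 < c)
    (hc1 : c ≤ 1) (hone : (1 : ℝ) ∈ AddSubgroup.zmultiples c)
    (hmul : ∀ i ∈ s, ℓ i ∈ AddSubgroup.zmultiples c) (hf : ∀ i ∈ s, f i < ⌈∑ i ∈ s, ℓ i⌉₊)
    (hbin : ∀ r, ∑ i ∈ s with f i = r, ℓ i ≤ 1) :
    ∃ r, ∑ i ∈ s with f i = r, ℓ i + c ≤ 1 ∧ (r : ℝ) < ∑ i ∈ s, ℓ i + c := by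
  by_contra! hnone
  set K := ⌈∑ i ∈ s, ℓ i⌉₊
  have hfull : ∀ r < K, ∑ i ∈ s with f i = r, ℓ i = 1 := by
    intro r hr
    refine eq_of_mem_zmultiples_of_lt_add hc (AddSubgroup.sum_mem _ fun i hi =>
      hmul i (mem_filter.1 hi).1) hone (hbin r) (not_le.1 fun hroom => ?_)
    linarith [hnone r hroom, Nat.lt_ceil.1 hr]
  have hsum : ∑ i ∈ s, ℓ i = K := by
    rw [← sum_fiberwise_of_maps_to (g := f) (t := range K) fun i hi => mem_range.2 (hf i hi),
      sum_congr rfl fun r hr => hfull r (mem_range.1 hr)]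
    simp
  have hempty : ∑ i ∈ s with f i = K, ℓ i = 0 :=
    sum_eq_zero fun i hi => absurd (mem_filter.1 hi).2 (hf i (mem_filter.1 hi).1).ne
  linarith [hnone K (by linarith)]

theorem exists_binning_of_isPowHalf [DecidableEq κ] (T : Finset κ) (ℓ : κ → ℝ)
    (hℓ : ∀ i ∈ T, IsPowHalf (ℓ i)) :
    ∃ f : κ → ℕ, (∀ i ∈ T, f i < ⌈∑ i ∈ T, ℓ i⌉₊) ∧ ∀ r, ∑ i ∈ T with f i = r, ℓ i ≤ 1 := by
  induction T using Finset.induction_on_min_value ℓ with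
  | empty => exact ⟨fun _ => 0, by simp, fun r => by simp⟩
  | insert a s has hmin ih =>
    have hℓs : ∀ i ∈ s, IsPowHalf (ℓ i) := fun i hi => hℓ i (mem_insert_of_mem hi)
    have ha := hℓ a (mem_insert_self a s)
    obtain ⟨f, hf, hbin⟩ := ih hℓs
    obtain ⟨r, hroom, hr⟩ := exists_bin_with_room s ℓ f ha.pos ha.le_one
      (IsPowHalf.mem_zmultiples ⟨0, by simp⟩ ha ha.le_one)
      (fun i hi => (hℓs i hi).mem_zmultiples ha (hmin i hi)) hf hbin
    have hfilter : ∀ r', {i ∈ s | Function.update f a r i = r'} = {i ∈ s | f i = r'} :=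
      fun r' => filter_congr fun i hi => by rw [Function.update_of_ne (ne_of_mem_of_not_mem hi has)]
    refine ⟨Function.update f a r, fun i hi => ?_, fun r' => ?_⟩
    · rw [sum_insert has]
      rcases mem_insert.1 hi with rfl | hi
      · rw [Function.update_self, Nat.lt_ceil]
        linarith
      · rw [Function.update_of_ne (ne_of_mem_of_not_mem hi has)]
        exact (hf i hi).trans_le (Nat.ceil_mono (by linarith [ha.pos]))
    · rw [filter_insert, Function.update_self, hfilter]
      split_ifs with hr'
      · rw [sum_insert fun h => has (mem_filter.1 h).1, ← hr']
        linarith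
      · exact hbin r'

end Binning

theorem sum_le_sum_image_fst_mul {τ : Type*} [DecidableEq τ] (P : Finset (τ × ℕ)) (φ : τ → ℝ)
    (N : τ → ℕ) (hφ : ∀ q ∈ P, 0 ≤ φ q.1) (hN : ∀ q ∈ P, q.2 < N q.1) :
    ∑ q ∈ P, φ q.1 ≤ ∑ t ∈ P.image Prod.fst, φ t * N t := by
  rw [← sum_fiberwise_of_maps_to (g := Prod.fst) fun q hq => mem_image_of_mem _ hq]
  refine sum_le_sum fun t ht => ?_
  obtain ⟨q₀, hq₀, rfl⟩ := mem_image.1 ht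
  have hcard : #{q ∈ P | q.1 = q₀.1} ≤ N q₀.1 := by
    calc #{q ∈ P | q.1 = q₀.1} ≤ #(range (N q₀.1)) := by
          refine card_le_card_of_injOn Prod.snd (fun q hq => ?_) fun q hq q' hq' h => ?_
          · obtain ⟨hqP, hq⟩ := mem_filter.1 hq
            exact mem_range.2 (hq ▸ hN q hqP)
          · exact Prod.ext ((mem_filter.1 hq).2.trans (mem_filter.1 hq').2.symm) h
      _ = N q₀.1 := card_range _
  calc ∑ q ∈ P with q.1 = q₀.1, φ q.1 = #{q ∈ P | q.1 = q₀.1} * φ q₀.1 := by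
        rw [sum_congr rfl fun q hq => congrArg φ (mem_filter.1 hq).2, sum_const, nsmul_eq_mul]
    _ ≤ φ q₀.1 * N q₀.1 := by
        rw [mul_comm]
        exact mul_le_mul_of_nonneg_left (by exact_mod_cast hcard) (hφ q₀ hq₀)

theorem exists_keyed_binning_of_isPowHalf {κ τ : Type*} [DecidableEq κ] [DecidableEq τ]
    (T : Finset κ) (key : κ → τ) (ℓ : κ → ℝ) (hℓ : ∀ i ∈ T, IsPowHalf (ℓ i)) :
    ∃ g : κ → τ × ℕ, (∀ i, (g i).1 = key i) ∧ (∀ q, ∑ i ∈ T with g i = q, ℓ i ≤ 1) ∧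
      ∀ φ : τ → ℝ, (∀ i ∈ T, 0 ≤ φ (key i)) →
        ∑ q ∈ T.image g, φ q.1 ≤ ∑ i ∈ T, φ (key i) * ℓ i + ∑ t ∈ T.image key, φ t := by
  choose f hf hbin using fun t =>
    exists_binning_of_isPowHalf {i ∈ T | key i = t} ℓ fun i hi => hℓ i (mem_filter.1 hi).1
  refine ⟨fun i => (key i, f (key i) i), fun i => rfl, fun q => ?_, fun φ hφ => ?_⟩
  · convert hbin q.1 q.2 using 2
    ext i
    simp only [mem_filter, Prod.ext_iff]
    constructor
    · rintro ⟨hi, h1, h2⟩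
      exact ⟨⟨hi, h1⟩, h1 ▸ h2⟩
    · rintro ⟨⟨hi, h1⟩, h2⟩
      exact ⟨hi, h1, h1 ▸ h2⟩
  have himage : (T.image fun i => (key i, f (key i) i)).image Prod.fst = T.image key := by
    rw [image_image]
    rfl
  have hφt : ∀ t ∈ T.image key, 0 ≤ φ t := forall_mem_image.2 hφ
  calc ∑ q ∈ T.image (fun i => (key i, f (key i) i)), φ q.1
      ≤ ∑ t ∈ T.image key, φ t * ⌈∑ i ∈ T with key i = t, ℓ i⌉₊ := by
        rw [← himage]
        exact sum_le_sum_image_fst_mul _ φ _ (forall_mem_image.2 hφ)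
          (forall_mem_image.2 fun i hi => hf (key i) i (mem_filter.2 ⟨hi, rfl⟩))
    _ ≤ ∑ t ∈ T.image key, φ t * (∑ i ∈ T with key i = t, ℓ i + 1) := by
        refine sum_le_sum fun t ht => mul_le_mul_of_nonneg_left ?_ (hφt t ht)
        exact (Nat.ceil_lt_add_one <| sum_nonneg fun i hi => (hℓ i (mem_filter.1 hi).1).pos.le).le
    _ = ∑ i ∈ T, φ (key i) * ℓ i + ∑ t ∈ T.image key, φ t := by
        simp only [mul_add, mul_one, sum_add_distrib, mul_sum]
        congr 1
        rw [← sum_fiberwise_of_maps_to (g := key) fun i hi => mem_image_of_mem key hi]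
        exact sum_congr rfl fun t _ => sum_congr rfl fun i hi => by rw [(mem_filter.1 hi).2]

theorem canPack_of_isPowHalf {ι : Type*} [DecidableEq ι] (I : Finset ι) (x y z : ι → ℝ)
    (hx : ∀ i ∈ I, IsPowHalf (x i)) (hy : ∀ i ∈ I, IsPowHalf (y i))
    (hz : ∀ i ∈ I, IsPowHalf (z i)) :
    CanPack I x y z 1 1 (∑ i ∈ I, y i * z i * x i +
      ∑ t ∈ I.image (fun i => (y i, z i)), t.1 * t.2 + ∑ γ ∈ I.image z, γ) := by
  -- `row i = ((y i, z i), n)` is the `n`-th row of items of depth `y i` and height `z i`;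
  -- `layer p = (γ, m)` is the `m`-th layer of rows of height `γ`.
  obtain ⟨row, hrow_key, hrow_fit, hrow_sum⟩ :=
    exists_keyed_binning_of_isPowHalf I (fun i => (y i, z i)) x hx
  set R := I.image row
  have hR : ∀ p ∈ R, IsPowHalf p.1.1 ∧ IsPowHalf p.1.2 :=
    forall_mem_image.2 fun i hi => by rw [hrow_key]; exact ⟨hy i hi, hz i hi⟩
  obtain ⟨layer, hlayer_key, hlayer_fit, hlayer_sum⟩ :=
    exists_keyed_binning_of_isPowHalf R (fun p => p.1.2) (fun p => p.1.1) fun p hp => (hR p hp).1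
  have hRz : R.image (fun p => p.1.2) = I.image z := by
    rw [image_image]
    exact image_congr fun i _ => by simp [hrow_key]
  refine CanPack.of_groups row (w' := fun _ => 1) (d' := fun p => p.1.1) (h' := fun p => p.1.2)
    (fun p hp => CanPack.of_sum_width_le (fun i hi => ?_) (hrow_fit p)) ?_
  · obtain ⟨hiI, rfl⟩ := mem_filter.1 hi
    simp only [hrow_key, le_refl, and_true]
    exact (hx i hiI).pos.le
  refine CanPack.of_groups layer (w' := fun _ => 1) (d' := fun _ => 1) (h' := fun q => q.1)
    (fun q hq => CanPack.of_sum_depth_le (fun p hp => ?_) (hlayer_fit q)) ?_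
  · obtain ⟨hpR, rfl⟩ := mem_filter.1 hp
    exact ⟨le_rfl, (hR p hpR).1.pos.le, (hlayer_key p).ge⟩
  refine CanPack.of_sum_height_le (forall_mem_image.2 fun p hp =>
    ⟨le_rfl, le_rfl, (hlayer_key p).symm ▸ (hR p hp).2.pos.le⟩) ?_
  calc ∑ q ∈ R.image layer, q.1
      ≤ ∑ p ∈ R, p.1.2 * p.1.1 + ∑ γ ∈ R.image (fun p => p.1.2), γ :=
        hlayer_sum id fun p hp => (hR p hp).2.pos.le
    _ ≤ _ := by
        rw [hRz]
        gcongr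
        simp only [mul_comm _ (Prod.fst _)]
        exact hrow_sum (fun t => t.1 * t.2) fun i hi => (mul_pos (hy i hi).pos (hz i hi).pos).le

theorem sum_image_pair_mul_le {ι : Type*} [DecidableEq ι] (I : Finset ι) (f g : ι → ℝ)
    (hf : ∀ i ∈ I, 0 ≤ f i) (hg : ∀ i ∈ I, 0 ≤ g i) :
    ∑ t ∈ I.image (fun i => (f i, g i)), t.1 * t.2 ≤
      (∑ a ∈ I.image f, a) * ∑ b ∈ I.image g, b := by
  rw [sum_mul_sum, ← sum_product']
  refine sum_le_sum_of_subset_of_nonneg (forall_mem_image.2 fun i hi =>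
    mem_product.2 ⟨mem_image_of_mem f hi, mem_image_of_mem g hi⟩) fun t ht _ => ?_
  obtain ⟨hf', hg'⟩ := mem_product.1 ht
  exact mul_nonneg (forall_mem_image.2 hf _ hf') (forall_mem_image.2 hg _ hg')

theorem canPack_unit_cube_of_height_le_eighth {ι : Type*} (I : Finset ι) (x y z : ι → ℝ)
    (hdims : ∀ i ∈ I, 0 < x i ∧ x i ≤ 1 ∧ 0 < y i ∧ y i ≤ 1 ∧ 0 < z i ∧ z i ≤ 1 / 8)
    (hvol : ∑ i ∈ I, x i * y i * z i ≤ 1 / 32) : CanPack I x y z 1 1 1 := by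
  classical
  choose! X hX hxX hXx using fun i hi =>
    exists_isPowHalf_le_lt_two_mul (hdims i hi).1 (hdims i hi).2.1
  choose! Y hY hyY hYy using fun i hi =>
    exists_isPowHalf_le_lt_two_mul (hdims i hi).2.2.1 (hdims i hi).2.2.2.1
  choose! Z hZ hzZ hZz using fun i hi =>
    exists_isPowHalf_le_lt_two_mul (hdims i hi).2.2.2.2.1 (by linarith [(hdims i hi).2.2.2.2.2])
  have hvolXYZ : ∑ i ∈ I, Y i * Z i * X i ≤ 1 / 4 := by
    calc ∑ i ∈ I, Y i * Z i * X i ≤ ∑ i ∈ I, 8 * (x i * y i * z i) := by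
          refine sum_le_sum fun i hi => ?_
          obtain ⟨hx0, -, hy0, -, hz0, -⟩ := hdims i hi
          calc Y i * Z i * X i ≤ (2 * y i) * (2 * z i) * (2 * x i) := by
                have := (hZ i hi).pos
                gcongr
                all_goals linarith [(hX i hi).pos, (hY i hi).pos, hXx i hi, hYy i hi, hZz i hi]
            _ = 8 * (x i * y i * z i) := by ring
      _ ≤ 1 / 4 := by rw [← mul_sum]; linarith
  have hZsum : ∑ γ ∈ I.image Z, γ ≤ 1 / 4 := by
    refine (sum_le_of_isPowHalf _ 3 <| forall_mem_image.2 fun i hi =>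
      ⟨hZ i hi, (hZ i hi).le_of_lt_two_mul ?_⟩).trans (by norm_num)
    linarith [hZz i hi, (hdims i hi).2.2.2.2.2, show (2 : ℝ) * 2⁻¹ ^ 3 = 1 / 4 by norm_num]
  have hYsum : ∑ β ∈ I.image Y, β ≤ 2 := by
    simpa using sum_le_of_isPowHalf _ 0 <| forall_mem_image.2 fun i hi =>
      ⟨hY i hi, by simpa using (hY i hi).le_one⟩
  have hpairs := sum_image_pair_mul_le I Y Z (fun i hi => (hY i hi).pos.le)
    fun i hi => (hZ i hi).pos.le
  have hZ0 : 0 ≤ ∑ γ ∈ I.image Z, γ := sum_nonneg <| forall_mem_image.2 fun i hi => (hZ i hi).pos.le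
  have hYZ := mul_le_mul hYsum hZsum hZ0 zero_le_two
  refine (canPack_of_isPowHalf I X Y Z hX hY hZ).mono hxX hyY hzZ le_rfl le_rfl ?_
  linarith

theorem exists_perm_min_last (u v t : ℝ) :
    ∃ x y z : ℝ, ({x, y, z} : Multiset ℝ) = {u, v, t} ∧ z ≤ x ∧ z ≤ y := by
  have hswap : ({u, t, v} : Multiset ℝ) = {u, v, t} :=
    congrArg (u ::ₘ ·) (Multiset.cons_swap t v 0)
  have hrotate : ({t, v, u} : Multiset ℝ) = {u, v, t} := by
    simp only [Multiset.insert_eq_cons, ← Multiset.cons_zero]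
    rw [Multiset.cons_swap t v, Multiset.cons_swap t u, Multiset.cons_swap v u]
  rcases le_total u v with huv | hvu
  · rcases le_total u t with hut | htu
    · exact ⟨t, v, u, hrotate, hut, huv⟩
    · exact ⟨u, v, t, rfl, htu, htu.trans huv⟩
  · rcases le_total v t with hvt | htv
    · exact ⟨u, t, v, hswap, hvu, hvt⟩
    · exact ⟨u, v, t, rfl, htv.trans hvu, htv⟩

theorem le_of_mul_mul_le_pow_three {x y z r : ℝ} (hz : 0 ≤ z) (hzx : z ≤ x) (hzy : z ≤ y)
    (hr : 0 ≤ r) (hvol : x * y * z ≤ r ^ 3) : z ≤ r := by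
  refine le_of_pow_le_pow_left₀ three_ne_zero hr (le_trans ?_ hvol)
  rw [pow_three, ← mul_assoc]
  have := hz.trans hzx
  gcongr

/-- If the items of `I` have all dimensions in `(0,1]` and
total volume at most `1/1728`, then, allowing 90-degree rotations (i.e. each
item may be packed with any permutation of its dimension triple), all items
of `I` pack into a single unit cube bin. -/
theorem stmt19 {ι : Type*} (I : Finset ι) (w d h : ι → ℝ)
    (hdims : ∀ i ∈ I, 0 < w i ∧ w i ≤ 1 ∧ 0 < d i ∧ d i ≤ 1 ∧
      0 < h i ∧ h i ≤ 1)
    (hvol : ∑ i ∈ I, w i * d i * h i ≤ 1 / 1728) :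
    ∃ w' d' h' : ι → ℝ,
      (∀ i ∈ I, ({w' i, d' i, h' i} : Multiset ℝ) = {w i, d i, h i}) ∧
      CanPack I w' d' h' 1 1 1 := by
  choose! x y z hperm hzx hzy using fun i (_ : i ∈ I) => exists_perm_min_last (w i) (d i) (h i)
  have hvol_eq : ∀ i ∈ I, x i * y i * z i = w i * d i * h i := fun i hi => by
    simpa [mul_assoc] using congrArg Multiset.prod (hperm i hi)
  refine ⟨x, y, z, hperm, canPack_unit_cube_of_height_le_eighth I x y z (fun i hi => ?_) ?_⟩
  · have hbounds : ∀ e ∈ ({x i, y i, z i} : Multiset ℝ), 0 < e ∧ e ≤ 1 := by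
      rw [hperm i hi]
      simpa [and_assoc] using hdims i hi
    simp only [Multiset.insert_eq_cons, Multiset.mem_cons, Multiset.mem_singleton,
      forall_eq_or_imp, forall_eq] at hbounds
    obtain ⟨⟨hx0, hx1⟩, ⟨hy0, hy1⟩, ⟨hz0, -⟩⟩ := hbounds
    have hzv : x i * y i * z i ≤ (1 / 12) ^ 3 := by
      rw [hvol_eq i hi]
      refine (single_le_sum (f := fun j => w j * d j * h j) (fun j hj => ?_) hi).trans ?_
      · obtain ⟨hw, -, hd, -, hh, -⟩ := hdims j hj
        positivity
      · linarith
    have := le_of_mul_mul_le_pow_three hz0.le (hzx i hi) (hzy i hi) (by norm_num) hzv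
    exact ⟨hx0, hx1, hy0, hy1, hz0, by linarith⟩
  · rw [sum_congr rfl hvol_eq]
    linarith
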